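/- arXiv:1005.5473 — 4 statements merged into one kernel-verified Lean document; each statement's English description precedes it below -/
import Mathlib

section
/- Let p be an odd prime, let n ≥ 1, and let Q be an invertible symmetric n×n matrix over the field F_p = ZMod p, defining a nondegenerate symmetric bilinear form B(x,y) = xᵀQy on V = (F_p)ⁿ. Then B is metabolic (i.e., there exists a linear subspace W ⊆ V with 2·dim W = n on which B vanishes identically) if and only if n is even and (-1)^{n(n-1)/2}·det Q is a nonzero square in F_p. -/
/-!
Diagonalise the form; a change of basis multiplies `det Q` by a nonzero square. Over a finite
field of odd characteristic every binary form `a s² + b t²` with `ab ≠ 0` represents every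
element, so given orthogonal `x, y, z` the plane `⟨y, z⟩` has an orthogonal basis `e, f` with
`B(e,e) = -B(x,x)` and `B(f,f) = -B(x,x) B(y,y) B(z,z)`. Then `x + e` is isotropic, `x - e`
pairs with it nontrivially, and the diagonal form on `f` and the remaining vectors has two
fewer dimensions and the same signed discriminant; two vectors span a hyperbolic plane
exactly when `-B(x,x) B(y,y)` is a square.

Conversely, in a basis extending one of a totally isotropic `W` of half dimension the Gram
matrix is `[[0, A], [Aᵀ, D]]`, of determinant `(-1)^m (det A)²`.
-/

open Module Submodule Matrix
open LinearMap (BilinForm)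
open LinearMap.BilinForm

theorem neg_one_pow_mul_sub_one_div_two {R : Type*} [Monoid R] [HasDistribNeg R] {m n : ℕ}
    (h : 2 * m = n) : (-1 : R) ^ (n * (n - 1) / 2) = (-1) ^ m := by
  subst h
  have hexp : 2 * m * (2 * m - 1) / 2 = m + 2 * (m * (m - 1)) := by
    rw [Nat.mul_assoc, Nat.mul_div_cancel_left _ two_pos]
    obtain _ | k := m
    · rfl
    · rw [show 2 * (k + 1) - 1 = 2 * k + 1 by omega, Nat.add_sub_cancel]
      ring
  rw [hexp, pow_add, pow_mul, neg_one_sq, one_pow, mul_one]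

open Polynomial in
theorem FiniteField.exists_mul_sq_add_mul_sq_eq {F : Type*} [Field F] [Fintype F]
    (hF : ringChar F ≠ 2) {a b : F} (ha : a ≠ 0) (hb : b ≠ 0) (c : F) :
    ∃ x y : F, a * x ^ 2 + b * y ^ 2 = c := by
  have hf : (C a * X ^ 2 : F[X]).degree = 2 := by
    rw [degree_C_mul_X_pow _ ha]; rfl
  have hg : (C b * X ^ 2 - C c : F[X]).degree = 2 := by
    rw [degree_sub_C (by rw [degree_C_mul_X_pow _ hb]; decide), degree_C_mul_X_pow _ hb]; rfl
  obtain ⟨x, y, hxy⟩ := exists_root_sum_quadratic hf hg (odd_card_of_char_ne_two hF)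
  refine ⟨x, y, ?_⟩
  simp only [eval_sub, eval_mul, eval_pow, eval_C, eval_X] at hxy
  linear_combination hxy

theorem isSquare_sq_mul_iff {F : Type*} [Field F] {u : F} (hu : u ≠ 0) (x : F) :
    IsSquare (u ^ 2 * x) ↔ IsSquare x := by
  refine ⟨fun h => ?_, (IsSquare.sq u).mul⟩
  simpa [hu] using h.div (IsSquare.sq u)

theorem Matrix.det_fromBlocks_zero₁₁ {m R : Type*} [Fintype m] [DecidableEq m] [CommRing R]
    (B C D : Matrix m m R) :
    (fromBlocks 0 B C D).det = (-1) ^ Fintype.card m * B.det * C.det := by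
  have hJ : (fromBlocks 0 1 1 0 : Matrix (m ⊕ m) (m ⊕ m) R).det = (-1) ^ Fintype.card m := by
    have h := congrArg det (show (fromBlocks 0 1 1 0 : Matrix (m ⊕ m) (m ⊕ m) R) *
        fromBlocks 1 0 1 1 = fromBlocks 1 1 1 0 by simp [fromBlocks_multiply])
    rwa [det_mul, det_fromBlocks_zero₁₂, det_fromBlocks_one₁₁, det_one, mul_one, mul_one,
      zero_sub, mul_one, det_neg, det_one, mul_one] at h
  rw [show fromBlocks 0 B C D = fromBlocks 0 1 1 0 * fromBlocks C D 0 B by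
      simp [fromBlocks_multiply],
    det_mul, hJ, det_fromBlocks_zero₂₁, mul_comm C.det, mul_assoc]

section IsotropicSubspace

variable {F V : Type*} [Field F] [AddCommGroup V] [Module F V] {B : BilinForm F V}

def IsTotallyIsotropic (B : BilinForm F V) (W : Submodule F V) : Prop :=
  ∀ x ∈ W, ∀ y ∈ W, B x y = 0

theorem isTotallyIsotropic_bot : IsTotallyIsotropic B ⊥ := by
  intro x hx y _
  simp [(mem_bot F).1 hx]

theorem LinearMap.BilinForm.apply_eq_zero_of_mem_span {S : Set V} {x y : V}
    (h : ∀ z ∈ S, B x z = 0) (hy : y ∈ span F S) : B x y = 0 :=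
  span_le (p := LinearMap.ker (B x)).2 h hy

theorem IsTotallyIsotropic.sup_span_singleton (hB : B.IsSymm) {W : Submodule F V}
    (hW : IsTotallyIsotropic B W) {v : V} (hv : B v v = 0) (hvW : ∀ w ∈ W, B v w = 0) :
    IsTotallyIsotropic B (W ⊔ F ∙ v) := by
  rintro _ hxs _ hyt
  obtain ⟨x, hx, _, hs, rfl⟩ := mem_sup.1 hxs
  obtain ⟨y, hy, _, ht, rfl⟩ := mem_sup.1 hyt
  obtain ⟨s, rfl⟩ := mem_span_singleton.1 hs
  obtain ⟨t, rfl⟩ := mem_span_singleton.1 ht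
  simp [hW x hx y hy, hvW y hy, hB.eq x v, hvW x hx, hv]

theorem IsTotallyIsotropic.sup_span_add [FiniteDimensional F V] (hB : B.IsSymm)
    (h2 : (2 : F) ≠ 0) {W : Submodule F V} (hW : IsTotallyIsotropic B W) {x e : V}
    (hx : B x x ≠ 0) (he : B e e = -B x x) (hxe : B x e = 0)
    (hxW : ∀ w ∈ W, B x w = 0) (heW : ∀ w ∈ W, B e w = 0) :
    IsTotallyIsotropic B (W ⊔ F ∙ (x + e)) ∧
      finrank F ↥(W ⊔ F ∙ (x + e)) = finrank F W + 1 := by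
  have hex : B e x = 0 := by rw [hB.eq, hxe]
  refine ⟨hW.sup_span_singleton hB (by simp [he, hxe, hex]) fun w hw => ?_,
    finrank_sup_span_singleton fun hv => ?_⟩
  · simp [hxW w hw, heW w hw]
  · -- `x - e` is orthogonal to `W` but not to `x + e`
    have : B (x - e) (x + e) = 0 := by simp [hxW _ hv, heW _ hv]
    simp only [map_sub, map_add, LinearMap.sub_apply, hxe, hex, he] at this
    exact mul_ne_zero h2 hx (by linear_combination this)

theorem exists_orthogonal_pair_in_span [Fintype F] (hF : ringChar F ≠ 2) (hB : B.IsSymm)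
    {y z : V} (hyz : B y z = 0) (hy : B y y ≠ 0) (hz : B z z ≠ 0) (c : F) :
    ∃ e ∈ span F {y, z}, ∃ f ∈ span F {y, z},
      B e e = c ∧ B f f = B y y * B z z * c ∧ B e f = 0 := by
  obtain ⟨s, t, hst⟩ := FiniteField.exists_mul_sq_add_mul_sq_eq hF hy hz c
  have hzy : B z y = 0 := by rw [hB.eq, hyz]
  have hmem : ∀ a b : F, a • y + b • z ∈ span F {y, z} := fun a b =>
    add_mem (smul_mem _ _ (subset_span (by simp))) (smul_mem _ _ (subset_span (by simp)))
  refine ⟨s • y + t • z, hmem _ _, (-(B z z * t)) • y + (B y y * s) • z, hmem _ _,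
    ?_, ?_, ?_⟩ <;>
    simp only [map_add, map_smul, LinearMap.add_apply, LinearMap.smul_apply, smul_eq_mul,
      hyz, hzy]
  · linear_combination hst
  · linear_combination B y y * B z z * hst
  · ring

theorem exists_isTotallyIsotropic_pair [FiniteDimensional F V] (h2 : (2 : F) ≠ 0)
    (hB : B.IsSymm) {x y : V} (hxy : B x y = 0) (hx : B x x ≠ 0) (hy : B y y ≠ 0)
    (hsq : IsSquare (-(B x x * B y y))) :
    ∃ W ≤ span F {x, y}, IsTotallyIsotropic B W ∧ finrank F W = 1 := by
  obtain ⟨s, hs⟩ := hsq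
  have hs0 : s ≠ 0 := by rintro rfl; simp [hx, hy] at hs
  have he : B ((B x x / s) • y) ((B x x / s) • y) = -B x x := by
    simp only [map_smul, LinearMap.smul_apply, smul_eq_mul]
    field_simp
    linear_combination -hs
  obtain ⟨hW, hrank⟩ := isTotallyIsotropic_bot.sup_span_add hB h2 hx he (by simp [hxy])
    (by simp) (by simp)
  refine ⟨⊥ ⊔ F ∙ (x + (B x x / s) • y), sup_le bot_le ?_, hW, by simpa using hrank⟩
  exact (span_singleton_le_iff_mem _ _).2
    (add_mem (subset_span (by simp)) (smul_mem _ _ (subset_span (by simp))))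

theorem exists_orthogonal_reduction [Fintype F] (hF : ringChar F ≠ 2) (hB : B.IsSymm)
    {x y z : V} {rest : List V} (hl : (x :: y :: z :: rest).Pairwise (fun u v => B u v = 0))
    (hy : B y y ≠ 0) (hz : B z z ≠ 0) :
    ∃ e ∈ span F {y, z}, ∃ f ∈ span F {y, z},
      B e e = -B x x ∧ B f f = B y y * B z z * -B x x ∧
      (f :: rest).Pairwise (fun u v => B u v = 0) ∧ B x e = 0 ∧
      ∀ w ∈ f :: rest, B x w = 0 ∧ B e w = 0 := by
  simp only [List.pairwise_cons, List.mem_cons, forall_eq_or_imp] at hl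
  obtain ⟨⟨hxy, hxz, hxr⟩, ⟨hyz, hyr⟩, hzr, hr⟩ := hl
  obtain ⟨e, he, f, hf, hee, hff, hef⟩ :=
    exists_orthogonal_pair_in_span hF hB hyz hy hz (-B x x)
  have hx_yz : ∀ v ∈ span F {y, z}, B x v = 0 :=
    fun v hv => B.apply_eq_zero_of_mem_span (by simp [hxy, hxz]) hv
  have hyz_rest : ∀ v ∈ span F {y, z}, ∀ w ∈ rest, B v w = 0 := fun v hv w hw => by
    rw [hB.eq]
    exact B.apply_eq_zero_of_mem_span (by simp [hB.eq w, hyr w hw, hzr w hw]) hv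
  refine ⟨e, he, f, hf, hee, hff, List.pairwise_cons.2 ⟨hyz_rest f hf, hr⟩, hx_yz e he, ?_⟩
  simp only [List.mem_cons, forall_eq_or_imp]
  exact ⟨⟨hx_yz f hf, hef⟩, fun w hw => ⟨hxr w hw, hyz_rest e he w hw⟩⟩

theorem exists_isTotallyIsotropic_of_pairwise [Fintype F] [FiniteDimensional F V]
    (hF : ringChar F ≠ 2) (hB : B.IsSymm) (m : ℕ) :
    ∀ l : List V, l.length = 2 * m → l.Pairwise (fun x y => B x y = 0) →
      (∀ x ∈ l, B x x ≠ 0) → IsSquare ((-1) ^ m * (l.map fun x => B x x).prod) →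
      ∃ W ≤ span F {x | x ∈ l}, IsTotallyIsotropic B W ∧ finrank F W = m := by
  induction m with
  | zero => exact fun l _ _ _ _ => ⟨⊥, bot_le, isTotallyIsotropic_bot, finrank_bot F V⟩
  | succ m ih =>
  have h2 := Ring.two_ne_zero hF
  rintro (_ | ⟨x, _ | ⟨y, _ | ⟨z, rest⟩⟩⟩) hlen hl hnorm hsq
  · simp at hlen
  · simp only [List.length_cons, List.length_nil] at hlen; omega
  · obtain rfl : m = 0 := by simpa using hlen
    obtain ⟨W, hWl, hW⟩ := exists_isTotallyIsotropic_pair h2 hB (List.pairwise_pair.1 hl :)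
      (hnorm x (by simp)) (hnorm y (by simp)) (by simpa using hsq)
    exact ⟨W, hWl.trans (span_mono (by simp [Set.insert_subset_iff])), hW⟩
  · have hx : B x x ≠ 0 := hnorm x (by simp)
    have hy : B y y ≠ 0 := hnorm y (by simp)
    have hz : B z z ≠ 0 := hnorm z (by simp)
    obtain ⟨e, he, f, hf, hee, hff, hpw, hxe, hperp⟩ :=
      exists_orthogonal_reduction hF hB hl hy hz
    have hyz_le : span F {y, z} ≤ span F {v | v ∈ x :: y :: z :: rest} :=
      span_mono (by simp [Set.insert_subset_iff])
    obtain ⟨W, hWl, hW, hrank⟩ := ih (f :: rest)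
      (by simp only [List.length_cons] at hlen ⊢; omega) hpw
      (by simpa [hff, hy, hz, hx] using fun w hw => hnorm w (by simp [hw]))
      (by
        convert hsq using 1
        simp only [List.map_cons, List.prod_cons, hff, pow_succ]
        ring)
    obtain ⟨hW', hrank'⟩ := hW.sup_span_add hB h2 hx hee hxe
      (fun w hw => B.apply_eq_zero_of_mem_span (fun v hv => (hperp v hv).1) (hWl hw))
      (fun w hw => B.apply_eq_zero_of_mem_span (fun v hv => (hperp v hv).2) (hWl hw))
    refine ⟨W ⊔ F ∙ (x + e), sup_le (hWl.trans (span_le.2 fun w hw => ?_)) ?_, hW',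
      hrank ▸ hrank'⟩
    · rcases List.mem_cons.1 hw with rfl | hw
      · exact hyz_le hf
      · exact subset_span (by simp [hw])
    · exact (span_singleton_le_iff_mem _ _).2 (add_mem (subset_span (by simp)) (hyz_le he))

end IsotropicSubspace

section Discriminant

variable {F V : Type*} [Field F] [AddCommGroup V] [Module F V]

theorem LinearMap.BilinForm.exists_det_toMatrix_eq_sq_mul (B : BilinForm F V)
    {ι κ : Type*} [Fintype ι] [DecidableEq ι] [Fintype κ] [DecidableEq κ]
    (b : Basis ι F V) (c : Basis κ F V) :
    ∃ u : F, u ≠ 0 ∧ (toMatrix c B).det = u ^ 2 * (toMatrix b B).det := by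
  let e := c.indexEquiv b
  let c' := c.reindex e
  refine ⟨b.det c', (b.isUnit_det c').ne_zero, ?_⟩
  have : toMatrix c B = (toMatrix c' B).submatrix e e := by
    ext i j; simp [toMatrix_apply, c']
  rw [this, det_submatrix_equiv_self, ← toMatrix_mul_basis_toMatrix b c', det_mul,
    det_mul, det_transpose, Basis.det_apply]
  ring

theorem LinearMap.BilinForm.IsSymm.isSquare_neg_one_pow_mul_det_toMatrix {R M : Type*}
    [CommRing R] [AddCommGroup M] [Module R M] {B : BilinForm R M} (hB : B.IsSymm)
    {ι : Type*} [Fintype ι] [DecidableEq ι] (c : Basis (ι ⊕ ι) R M)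
    (hc : ∀ i j, B (c (.inl i)) (c (.inl j)) = 0) :
    IsSquare ((-1) ^ Fintype.card ι * (toMatrix c B).det) := by
  set G := toMatrix c B
  have hG : G = fromBlocks 0 G.toBlocks₁₂ G.toBlocks₁₂ᵀ G.toBlocks₂₂ := by
    ext (i | i) (j | j) <;> simp [G, toBlocks₁₂, toBlocks₂₂, toMatrix_apply, hc, hB.eq]
  rw [hG, det_fromBlocks_zero₁₁, det_transpose, ← mul_assoc, ← mul_assoc, ← pow_add,
    Even.neg_one_pow ⟨_, rfl⟩, one_mul]
  exact ⟨_, rfl⟩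

theorem Matrix.IsSymm.isSquare_neg_one_pow_mul_det {ι : Type*} [Fintype ι] [DecidableEq ι]
    {Q : Matrix ι ι F} (hQ : Q.IsSymm) {W : Submodule F (ι → F)}
    (hW : IsTotallyIsotropic (toBilin' Q) W) (hrank : 2 * finrank F W = Fintype.card ι) :
    IsSquare ((-1) ^ finrank F W * Q.det) := by
  obtain ⟨W', hWW'⟩ := W.exists_isCompl
  have hW' : finrank F W' = finrank F W := by
    have := Submodule.finrank_add_eq_of_isCompl hWW'
    rw [finrank_fintype_fun_eq_card] at this
    omega
  let c := ((finBasisOfFinrankEq F W rfl).prod (finBasisOfFinrankEq F W' hW')).map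
    (W.prodEquivOfIsCompl W' hWW')
  have hc : ∀ i, c (.inl i) ∈ W := by intro i; simp [c]
  have := (isSymm_toBilin'_iff_isSymm.2 hQ).isSquare_neg_one_pow_mul_det_toMatrix c
    fun i j => hW _ (hc i) _ (hc j)
  obtain ⟨u, hu, hdet⟩ := (toBilin' Q).exists_det_toMatrix_eq_sq_mul (Pi.basisFun F ι) c
  rwa [Fintype.card_fin, hdet, toMatrix_basisFun, toMatrix'_toBilin',
    mul_left_comm, isSquare_sq_mul_iff hu] at this

theorem Matrix.IsSymm.exists_isTotallyIsotropic [Fintype F] (hF : ringChar F ≠ 2)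
    {ι : Type*} [Fintype ι] [DecidableEq ι] {Q : Matrix ι ι F} (hQ : Q.IsSymm) {m : ℕ}
    (hm : Fintype.card ι = 2 * m) (hdet : Q.det ≠ 0) (hsq : IsSquare ((-1) ^ m * Q.det)) :
    ∃ W : Submodule F (ι → F), IsTotallyIsotropic (toBilin' Q) W ∧ finrank F W = m := by
  have : Invertible (2 : F) := invertibleOfNonzero (Ring.two_ne_zero hF)
  have hB := isSymm_toBilin'_iff_isSymm.2 hQ
  obtain ⟨b, hb⟩ := exists_orthogonal_basis (isSymm_iff.1 hB)
  obtain ⟨u, hu, hdet'⟩ := (toBilin' Q).exists_det_toMatrix_eq_sq_mul (Pi.basisFun F ι) b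
  have hG : toMatrix b (toBilin' Q) = diagonal fun i => toBilin' Q (b i) (b i) := by
    ext i j
    rcases eq_or_ne i j with rfl | hij
    · simp [toMatrix_apply]
    · simp [toMatrix_apply, hb hij, hij]
  rw [toMatrix_basisFun, toMatrix'_toBilin', hG, det_diagonal] at hdet'
  have hd : ∀ i, toBilin' Q (b i) (b i) ≠ 0 := fun i =>
    Finset.prod_ne_zero_iff.1 (hdet' ▸ mul_ne_zero (pow_ne_zero 2 hu) hdet) i (Finset.mem_univ i)
  obtain ⟨W, -, hW⟩ := exists_isTotallyIsotropic_of_pairwise hF hB m (List.ofFn b)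
    (by simp [finrank_fintype_fun_eq_card, hm]) (List.pairwise_ofFn.2 fun i j hij => hb hij.ne)
    (List.forall_mem_ofFn_iff.2 hd)
    (by rwa [List.map_ofFn, List.prod_ofFn, Function.comp_def, hdet', mul_left_comm,
      isSquare_sq_mul_iff hu])
  exact ⟨W, hW⟩

end Discriminant

theorem stmt_0_general (p : ℕ) [Fact p.Prime] (hp : Odd p) (n : ℕ)
    (Q : Matrix (Fin n) (Fin n) (ZMod p)) (hsymm : Q.IsSymm) (hinv : IsUnit Q.det) :
    (∃ W : Submodule (ZMod p) (Fin n → ZMod p),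
        2 * Module.finrank (ZMod p) W = n ∧
        ∀ x ∈ W, ∀ y ∈ W, dotProduct x (Q.mulVec y) = 0) ↔
      (Even n ∧ ∃ c : ZMod p, c ≠ 0 ∧
        (-1 : ZMod p) ^ (n * (n - 1) / 2) * Q.det = c ^ 2) := by
  have hF : ringChar (ZMod p) ≠ 2 := by
    rw [ZMod.ringChar_zmod_n]
    rintro rfl
    exact Nat.not_odd_iff_even.2 even_two hp
  have hiso (W : Submodule (ZMod p) (Fin n → ZMod p)) :
      (∀ x ∈ W, ∀ y ∈ W, x ⬝ᵥ Q *ᵥ y = 0) ↔ IsTotallyIsotropic (toBilin' Q) W := by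
    simp only [IsTotallyIsotropic, toBilin'_apply']
  simp only [hiso]
  constructor
  · rintro ⟨W, hrank, hW⟩
    obtain ⟨c, hc⟩ := hsymm.isSquare_neg_one_pow_mul_det hW (by simpa using hrank)
    refine ⟨⟨_, hrank.symm.trans (two_mul _)⟩, c, ?_, ?_⟩
    · rintro rfl
      simp [hinv.ne_zero] at hc
    · rw [neg_one_pow_mul_sub_one_div_two hrank, hc, sq]
  · rintro ⟨⟨m, rfl⟩, c, -, hdisc⟩
    rw [neg_one_pow_mul_sub_one_div_two (two_mul m)] at hdisc
    obtain ⟨W, hW, hrank⟩ := hsymm.exists_isTotallyIsotropic hF (by simp [two_mul])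
      hinv.ne_zero ⟨c, hdisc.trans (sq c)⟩
    exact ⟨W, by omega, hW⟩

/-- For an odd prime `p` and an invertible symmetric `n × n` matrix `Q` over
`F_p` (`n ≥ 1`), the bilinear form `B(x,y) = xᵀQy` on `(F_p)ⁿ` is metabolic (vanishes on a
subspace of half dimension) iff `n` is even and `(-1)^(n(n-1)/2) · det Q` is a nonzero square. -/
theorem stmt_0 (p : ℕ) [Fact p.Prime] (hp : Odd p) (n : ℕ) (hn : 1 ≤ n)
    (Q : Matrix (Fin n) (Fin n) (ZMod p)) (hsymm : Q.IsSymm) (hinv : IsUnit Q.det) :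
    (∃ W : Submodule (ZMod p) (Fin n → ZMod p),
        2 * Module.finrank (ZMod p) W = n ∧
        ∀ x ∈ W, ∀ y ∈ W, dotProduct x (Q.mulVec y) = 0) ↔
      (Even n ∧ ∃ c : ZMod p, c ≠ 0 ∧
        (-1 : ZMod p) ^ (n * (n - 1) / 2) * Q.det = c ^ 2) :=
  stmt_0_general p hp n Q hsymm hinv
end

section
/- Let G be a finite abelian group of odd order and let q be a quadratic linking form on G. Then the Gauss sum S = Σ_{g ∈ G} exp(2πi·q(g)) satisfies S⁴ = |G|²; equivalently, Γ(q) := |G|^{-1/2}·S is a fourth root of unity. -/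
/-!
Write `e(x) = exp(2πix)` and `S(f) = ∑ g, e(f g)`. Substituting `g ↦ g + h` in `S(q) S(-q)` and
summing the character `e(β(g, ·))` over `G`, nondegeneracy of the polar form `β` leaves only the
term `g = 0`: `S(q) S(-q) = |G|`. As `|G|` is odd, `-1 ≡ a² + b² (mod |G|²)` (Hensel's lemma and
the Chinese remainder theorem); then `(x, y) ↦ (a x + b y, b x - a y)` is a bijection of `G × G`
sending `q x + q y` to its negative, so `S(q)² = S(-q)²` and `S(q)⁴ = (S(q) S(-q))² = |G|²`.
-/

/-- The group `ℚ/ℤ`. -/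
abbrev QZ : Type := ℚ ⧸ AddSubgroup.zmultiples (1 : ℚ)

/-- A linking form on an abelian group `G`: a symmetric biadditive pairing `G × G → ℚ/ℤ`
which is nonsingular, i.e. `g ↦ β(g,·)` is a bijection from `G` onto `Hom(G, ℚ/ℤ)`. -/
def IsLinkingForm {G : Type*} [AddCommGroup G] (β : G → G → QZ) : Prop :=
  (∀ g h : G, β g h = β h g) ∧
  (∀ g h k : G, β (g + h) k = β g k + β h k) ∧
  (∀ φ : G →+ QZ, ∃! g : G, ∀ h : G, β g h = φ h)

/-- A quadratic linking form on `G`: an even function `q : G → ℚ/ℤ` such that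
`β_q(g,h) = q(g+h) - q(g) - q(h)` is a linking form. -/
def IsQuadraticLinkingForm {G : Type*} [AddCommGroup G] (q : G → QZ) : Prop :=
  (∀ g : G, q (-g) = q g) ∧
  IsLinkingForm (fun g h => q (g + h) - q g - q h)

open QuadraticMap (polar polar_comm polarBilin)

open Polynomial in
theorem ZMod.exists_sq_add_sq_eq_neg_one_of_prime_pow {p : ℕ} [Fact p.Prime] (hp : p ≠ 2)
    (k : ℕ) : ∃ a b : ZMod (p ^ k), a ^ 2 + b ^ 2 = -1 := by
  obtain ⟨a, b, hab, ha⟩ :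
      ∃ a b : ℤ, ((a ^ 2 + b ^ 2 + 1 : ℤ) : ZMod p) = 0 ∧ (a : ZMod p) ≠ 0 := by
    obtain ⟨a, b, hab⟩ := ZMod.sq_add_sq p (-1)
    obtain ⟨a, rfl⟩ := ZMod.intCast_surjective a
    obtain ⟨b, rfl⟩ := ZMod.intCast_surjective b
    by_cases ha : (a : ZMod p) = 0
    · refine ⟨b, a, by push_cast; linear_combination hab, fun hb => ?_⟩
      simp [ha, hb] at hab
    · exact ⟨a, b, by push_cast; linear_combination hab, ha⟩
  -- Hensel's lemma lifts the root `a` of `X² + (b² + 1)` modulo `p` to `ℤ_[p]`.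
  let F : ℤ[X] := X ^ 2 + C (b ^ 2 + 1)
  have hF (x : ℤ_[p]) : F.aeval x = x ^ 2 + ((b ^ 2 + 1 : ℤ) : ℤ_[p]) := by
    rw [aeval_add, aeval_X_pow, aeval_C, algebraMap_int_eq, eq_intCast]
  have hF' (x : ℤ_[p]) : F.derivative.aeval x = ((2 : ℤ) : ℤ_[p]) * x := by
    rw [derivative_add, derivative_X_pow, derivative_C, add_zero, aeval_mul, aeval_C, aeval_X_pow]
    simp
  have hnorm : ‖F.aeval (a : ℤ_[p])‖ < ‖F.derivative.aeval (a : ℤ_[p])‖ ^ 2 := by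
    have h1 : ‖((a ^ 2 + b ^ 2 + 1 : ℤ) : ℤ_[p])‖ < 1 := by
      rwa [PadicInt.norm_int_lt_one_iff_dvd, ← ZMod.intCast_zmod_eq_zero_iff_dvd]
    have h2 : ‖((2 * a : ℤ) : ℤ_[p])‖ = 1 := by
      refine le_antisymm (PadicInt.norm_le_one _) (not_lt.mp fun h => ?_)
      rw [PadicInt.norm_int_lt_one_iff_dvd, ← ZMod.intCast_zmod_eq_zero_iff_dvd] at h
      push_cast at h
      exact mul_ne_zero (Ring.two_ne_zero (by rwa [ZMod.ringChar_zmod_n])) ha h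
    rw [hF, hF', ← Int.cast_mul, h2, one_pow]
    push_cast at h1 ⊢
    convert h1 using 2
    ring
  obtain ⟨z, hz, -⟩ := hensels_lemma hnorm
  refine ⟨PadicInt.toZModPow k z, b, ?_⟩
  have hz' := congrArg (PadicInt.toZModPow k) (hF z ▸ hz)
  simp only [map_add, map_pow, map_intCast, map_zero] at hz'
  push_cast at hz'
  linear_combination hz'

theorem ZMod.exists_sq_add_sq_eq_neg_one_mul {m n : ℕ} (hc : m.Coprime n)
    (hm : ∃ a b : ZMod m, a ^ 2 + b ^ 2 = -1) (hn : ∃ a b : ZMod n, a ^ 2 + b ^ 2 = -1) :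
    ∃ a b : ZMod (m * n), a ^ 2 + b ^ 2 = -1 := by
  obtain ⟨a₁, b₁, h₁⟩ := hm
  obtain ⟨a₂, b₂, h₂⟩ := hn
  let e := ZMod.chineseRemainder hc
  refine ⟨e.symm (a₁, a₂), e.symm (b₁, b₂), ?_⟩
  rw [← map_pow, ← map_pow, ← map_add, Prod.pow_mk, Prod.pow_mk, Prod.mk_add_mk, h₁, h₂]
  exact e.symm.map_neg_one

theorem ZMod.exists_sq_add_sq_eq_neg_one_of_odd {n : ℕ} (hn : Odd n) :
    ∃ a b : ZMod n, a ^ 2 + b ^ 2 = -1 := by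
  induction n using Nat.recOnPosPrimePosCoprime with
  | prime_pow p k hp hk =>
    have : Fact p.Prime := ⟨hp⟩
    refine ZMod.exists_sq_add_sq_eq_neg_one_of_prime_pow (fun h2 => ?_) k
    subst h2
    exact Nat.not_even_iff_odd.mpr hn ((Nat.even_pow' hk.ne').mpr even_two)
  | zero => exact absurd hn Nat.not_odd_zero
  | one => exact ⟨0, 0, Subsingleton.elim _ _⟩
  | coprime a b ha hb hab iha ihb =>
    rw [Nat.odd_mul] at hn
    exact ZMod.exists_sq_add_sq_eq_neg_one_mul hab (iha hn.1) (ihb hn.2)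

namespace IsQuadraticLinkingForm

variable {G : Type*} [AddCommGroup G] {q : G → QZ}

theorem polar_add_left (hq : IsQuadraticLinkingForm q) (x x' y : G) :
    polar q (x + x') y = polar q x y + polar q x' y :=
  hq.2.2.1 x x' y

theorem polar_zsmul_left (hq : IsQuadraticLinkingForm q) (n : ℤ) (x y : G) :
    polar q (n • x) y = n • polar q x y :=
  map_zsmul (AddMonoidHom.mk' (polar q · y) (hq.polar_add_left · · y)) n x

theorem map_zero (hq : IsQuadraticLinkingForm q) : q 0 = 0 := by
  have h := hq.polar_zsmul_left 0 0 0
  rwa [zero_smul, zero_smul, polar, add_zero, sub_self, zero_sub, neg_eq_zero] at h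

theorem polar_self (hq : IsQuadraticLinkingForm q) (x : G) : polar q x x = 2 • q x := by
  have h := hq.polar_zsmul_left (-1) x x
  rw [neg_one_zsmul, neg_one_zsmul, eq_neg_iff_add_eq_zero, polar, polar, neg_add_cancel,
    hq.1, hq.map_zero] at h
  rw [polar, two_smul]
  linear_combination (norm := abel) h

theorem map_zsmul (hq : IsQuadraticLinkingForm q) (n : ℤ) (x : G) :
    q (n • x) = (n * n) • q x := by
  induction n using Int.induction_on with
  | zero => simp [hq.map_zero]
  | succ n ih =>
    rw [add_smul, one_smul, QuadraticMap.map_add q, ih, hq.polar_zsmul_left, hq.polar_self]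
    module
  | pred n ih =>
    rw [sub_smul, one_smul, sub_eq_add_neg, QuadraticMap.map_add q, ih, hq.1, ← neg_one_zsmul x,
      hq.polar_zsmul_left, polar_comm, hq.polar_zsmul_left, hq.polar_self]
    module

def toQuadraticMap (hq : IsQuadraticLinkingForm q) : QuadraticMap ℤ G QZ :=
  .ofPolar q hq.map_zsmul hq.polar_add_left hq.polar_zsmul_left

@[simp]
theorem coe_toQuadraticMap (hq : IsQuadraticLinkingForm q) : ⇑hq.toQuadraticMap = q := rfl

theorem separatingLeft_polarBilin (hq : IsQuadraticLinkingForm q) :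
    (polarBilin hq.toQuadraticMap).SeparatingLeft :=
  fun x hx => (hq.2.2.2 0).unique hx fun y => by simp [hq.map_zero]

end IsQuadraticLinkingForm

theorem zsmul_eq_neg_of_dvd_add_one {M : Type*} [AddCommGroup M] {m k : ℤ} (hk : m ∣ k + 1)
    {z : M} (hz : m • z = 0) : k • z = -z := by
  obtain ⟨c, hc⟩ := hk
  rw [eq_sub_of_add_eq hc, sub_smul, mul_comm, mul_smul, hz, smul_zero, one_smul, zero_sub]

theorem QuadraticMap.map_smul_add_smul {R M N : Type*} [CommRing R] [AddCommGroup M]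
    [AddCommGroup N] [Module R M] [Module R N] (Q : QuadraticMap R M N) (a b : R) (x y : M) :
    Q (a • x + b • y) = (a * a) • Q x + (b * b) • Q y + (a * b) • polar Q x y := by
  rw [QuadraticMap.map_add Q, Q.map_smul, Q.map_smul, polar_smul_left, polar_smul_right, smul_smul]

namespace QZ

noncomputable def toAddCircle : QZ →+ AddCircle (1 : ℝ) :=
  QuotientAddGroup.map _ _ (Rat.castHom ℝ).toAddMonoidHom <| by
    rintro _ ⟨n, rfl⟩
    exact ⟨n, by simp⟩

theorem toAddCircle_injective : Function.Injective toAddCircle := by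
  refine (injective_iff_map_eq_zero _).mpr fun x hx => ?_
  induction x using QuotientAddGroup.induction_on with
  | H r =>
  obtain ⟨n, hn⟩ := (QuotientAddGroup.eq_zero_iff _).mp hx
  have hn' : (n : ℝ) = r := by simpa using hn
  refine (QuotientAddGroup.eq_zero_iff _).mpr ⟨n, ?_⟩
  simpa using (mod_cast hn' : (n : ℚ) = r)

noncomputable def stdAddChar : AddChar QZ ℂ :=
  Circle.coeHom.compAddChar (AddCircle.toCircle_addChar.compAddMonoidHom toAddCircle)

theorem stdAddChar_mk (r : ℚ) :
    stdAddChar r = Complex.exp (2 * Real.pi * Complex.I * r) := by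
  change (AddCircle.toCircle ((r : ℝ) : AddCircle (1 : ℝ)) : ℂ) = _
  rw [AddCircle.toCircle_apply_mk, Circle.coe_exp]
  push_cast
  ring_nf

theorem stdAddChar_injective : Function.Injective stdAddChar :=
  Circle.coe_injective.comp ((AddCircle.injective_toCircle one_ne_zero).comp toAddCircle_injective)

variable {G : Type*} [Fintype G]

noncomputable def gaussSum (f : G → QZ) : ℂ := ∑ g, stdAddChar (f g)

theorem gaussSum_sq (f : G → QZ) :
    gaussSum f ^ 2 = ∑ p : G × G, stdAddChar (f p.1 + f p.2) := by
  simp only [gaussSum, _root_.sq, Finset.sum_mul_sum, Fintype.sum_prod_type, AddChar.map_add_eq_mul]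

theorem sum_stdAddChar_polar [AddCommGroup G] [DecidableEq G] (Q : QuadraticMap ℤ G QZ)
    (hQ : (polarBilin Q).SeparatingLeft) (x : G) :
    ∑ y, stdAddChar (polar Q x y) = if x = 0 then (Fintype.card G : ℂ) else 0 := by
  classical
  let ψ := stdAddChar.compAddMonoidHom (polarBilin Q x).toAddMonoidHom
  have hψ : ψ = 0 ↔ x = 0 := by
    refine ⟨fun h => hQ x fun y => stdAddChar_injective ?_, fun h => ?_⟩
    · simpa [ψ] using AddChar.eq_zero_iff.mp h y
    · ext y; simp [ψ, h]
  simpa [ψ, hψ] using AddChar.sum_eq_ite ψ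

theorem gaussSum_mul_gaussSum_neg [AddCommGroup G] (Q : QuadraticMap ℤ G QZ)
    (hQ : (polarBilin Q).SeparatingLeft) :
    gaussSum Q * gaussSum (-Q) = Fintype.card G := by
  classical
  calc gaussSum Q * gaussSum (-Q)
      = ∑ y, ∑ x, stdAddChar (Q (x + y) - Q y) := by
        rw [gaussSum, gaussSum, Finset.sum_mul_sum, Finset.sum_comm]
        refine Finset.sum_congr rfl fun y _ => ?_
        rw [← Equiv.sum_comp (Equiv.addRight y)]
        simp [sub_eq_add_neg, AddChar.map_add_eq_mul]
    _ = ∑ x, stdAddChar (Q x) * ∑ y, stdAddChar (polar Q x y) := by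
        rw [Finset.sum_comm]
        refine Finset.sum_congr rfl fun x _ => ?_
        rw [Finset.mul_sum]
        refine Finset.sum_congr rfl fun y _ => ?_
        rw [← AddChar.map_add_eq_mul, polar]
        abel_nf
    _ = Fintype.card G := by
        simp [sum_stdAddChar_polar Q hQ]

theorem gaussSum_sq_eq_gaussSum_neg_sq [AddCommGroup G] (Q : QuadraticMap ℤ G QZ) {a b : ℤ}
    (hab : (Fintype.card G : ℤ) ^ 2 ∣ a ^ 2 + b ^ 2 + 1) :
    gaussSum Q ^ 2 = gaussSum (-Q) ^ 2 := by
  have hG (x : G) : (a ^ 2 + b ^ 2) • x = -x :=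
    zsmul_eq_neg_of_dvd_add_one ((dvd_pow_self _ two_ne_zero).trans hab)
      (by rw [natCast_zsmul, card_nsmul_eq_zero])
  have hQ (x : G) : (a ^ 2 + b ^ 2) • Q x = -Q x := by
    refine zsmul_eq_neg_of_dvd_add_one hab ?_
    rw [sq, ← Q.map_smul, natCast_zsmul, card_nsmul_eq_zero, QuadraticMap.map_zero]
  let rot (p : G × G) : G × G := (a • p.1 + b • p.2, b • p.1 - a • p.2)
  have hrot_rot (p : G × G) : rot (rot p) = -p := by
    ext
    · rw [Prod.fst_neg, ← hG]; module
    · rw [Prod.snd_neg, ← hG]; module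
  have hrot_bij : Function.Bijective rot := by
    refine Finite.injective_iff_bijective.mp fun p p' h => ?_
    simpa [hrot_rot] using congrArg rot h
  have hrot_Q (p : G × G) : Q (rot p).1 + Q (rot p).2 = -(Q p.1 + Q p.2) := by
    simp only [rot]
    rw [neg_add, ← hQ, ← hQ, sub_eq_add_neg, ← neg_smul, Q.map_smul_add_smul, Q.map_smul_add_smul]
    module
  rw [gaussSum_sq, gaussSum_sq, ← hrot_bij.sum_comp]
  simp only [hrot_Q, neg_apply, neg_add]

theorem gaussSum_pow_four [AddCommGroup G] (Q : QuadraticMap ℤ G QZ)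
    (hQ : (polarBilin Q).SeparatingLeft) (hodd : Odd (Fintype.card G)) :
    gaussSum Q ^ 4 = (Fintype.card G : ℂ) ^ 2 := by
  obtain ⟨a, b, hab⟩ := ZMod.exists_sq_add_sq_eq_neg_one_of_odd (hodd.pow (n := 2))
  obtain ⟨a, rfl⟩ := ZMod.intCast_surjective a
  obtain ⟨b, rfl⟩ := ZMod.intCast_surjective b
  have hdvd : (Fintype.card G : ℤ) ^ 2 ∣ a ^ 2 + b ^ 2 + 1 := by
    rw [← Nat.cast_pow, ← ZMod.intCast_zmod_eq_zero_iff_dvd]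
    push_cast
    rw [hab, neg_add_cancel]
  calc gaussSum Q ^ 4 = gaussSum Q ^ 2 * gaussSum (-Q) ^ 2 := by
        rw [← gaussSum_sq_eq_gaussSum_neg_sq Q hdvd]; ring
    _ = (Fintype.card G : ℂ) ^ 2 := by rw [← mul_pow, gaussSum_mul_gaussSum_neg Q hQ]

end QZ

/-- Let `G` be a finite abelian group of odd order and `q` a quadratic
linking form on `G`. Choosing any rational representatives `Q g` of the values `q g`,
the Gauss sum `S = ∑_{g ∈ G} exp(2πi · Q g)` satisfies `S⁴ = |G|²`, i.e. `|G|^{-1/2}·S`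
is a fourth root of unity. -/
theorem stmt_3 (G : Type*) [AddCommGroup G] [Fintype G] (hodd : Odd (Fintype.card G))
    (q : G → QZ) (hq : IsQuadraticLinkingForm q)
    (Q : G → ℚ) (hQ : ∀ g : G, (QuotientAddGroup.mk (Q g) : QZ) = q g) :
    (∑ g : G, Complex.exp (2 * Real.pi * Complex.I * (Q g : ℂ))) ^ 4 =
      (Fintype.card G : ℂ) ^ 2 := by
  have hS : ∑ g : G, Complex.exp (2 * Real.pi * Complex.I * (Q g : ℂ))
      = QZ.gaussSum hq.toQuadraticMap := by
    simp only [QZ.gaussSum, IsQuadraticLinkingForm.coe_toQuadraticMap, ← hQ, QZ.stdAddChar_mk]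
  rw [hS]
  exact QZ.gaussSum_pow_four _ hq.separatingLeft_polarBilin hodd
end

section
/- Let V be an n-dimensional vector space over F_2 = ZMod 2 equipped with a nondegenerate symmetric bilinear form ⟨·,·⟩ : V × V → F_2, and let q : V → ℤ/4 be a function satisfying q(x+y) = q(x) + q(y) + 2⟨x,y⟩ for all x, y ∈ V, where 2· : F_2 → ℤ/4 denotes the injective homomorphism sending 1 to 2. Then the complex number S = Σ_{x ∈ V} i^{q(x)} satisfies S⁸ = 2^{4n}; equivalently, 2^{-n/2}·S is an eighth root of unity. -/
open Finset

private noncomputable def stmt10f (a : ZMod 4) : ℂ := Complex.I ^ a.val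

private lemma stmt10_I_mod (k : ℕ) : Complex.I ^ (k % 4) = Complex.I ^ k := by
  conv_rhs => rw [← Nat.div_add_mod k 4]
  rw [pow_add, pow_mul, Complex.I_pow_four, one_pow, one_mul]

private lemma stmt10f_add (a b : ZMod 4) : stmt10f (a + b) = stmt10f a * stmt10f b := by
  unfold stmt10f
  rw [← pow_add, ZMod.val_add, stmt10_I_mod]

private lemma stmt10f_two (b : ZMod 2) :
    stmt10f (2 * ((b.val : ZMod 4))) = (-1 : ℂ) ^ b.val := by
  rcases (show b = 0 ∨ b = 1 by revert b; decide) with rfl | rfl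
  · norm_num [stmt10f, ZMod.val_one]
  · have h1 : ((1 : ZMod 2)).val = 1 := rfl
    have h2 : ((2 : ZMod 4)).val = 2 := rfl
    rw [h1]
    norm_num [stmt10f, h2, Complex.I_sq]

private lemma stmt10f_pow4 (a : ZMod 4) : stmt10f a ^ 4 = 1 := by
  unfold stmt10f
  rw [← pow_mul, mul_comm, pow_mul, Complex.I_pow_four, one_pow]

private lemma stmt10_neg_pow (a : ZMod 2) :
    (-1 : ℂ) ^ (a + 1).val = -(-1 : ℂ) ^ a.val := by
  rcases (show a = 0 ∨ a = 1 by revert a; decide) with rfl | rfl <;>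
    norm_num [show ((1:ZMod 2)).val = 1 from rfl, show ((0:ZMod 2)).val = 0 from rfl,
      show ((1+1:ZMod 2)).val = 0 from rfl, show ((2:ZMod 2)).val = 0 from rfl]

/-- the Brown invariant is defined. Let `V` be an `n`-dimensional
`F₂`-vector space with a nondegenerate symmetric bilinear form `B`, and let `q : V → ℤ/4`
satisfy `q(x+y) = q(x) + q(y) + 2·B(x,y)` (where `2· : F₂ → ℤ/4` sends `1` to `2`). Then
`S = ∑_{x ∈ V} i^{q(x)}` satisfies `S⁸ = 2^{4n}`, i.e. `2^{-n/2}·S` is an eighth root of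
unity. -/
theorem stmt_10 (n : ℕ) (V : Type*) [AddCommGroup V] [Module (ZMod 2) V] [Fintype V]
    (hdim : Module.finrank (ZMod 2) V = n)
    (B : V → V → ZMod 2)
    (hsymm : ∀ x y : V, B x y = B y x)
    (hadd : ∀ x y z : V, B (x + y) z = B x z + B y z)
    (hnd : ∀ x : V, (∀ y : V, B x y = 0) → x = 0)
    (q : V → ZMod 4)
    (hq : ∀ x y : V, q (x + y) = q x + q y + 2 * ((B x y).val : ZMod 4)) :
    (∑ x : V, Complex.I ^ (q x).val) ^ 8 = 2 ^ (4 * n) := by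
  classical
  have hVchar : ∀ v : V, v + v = 0 := by
    intro v
    have h : (2 : ZMod 2) • v = 0 := by
      rw [show (2 : ZMod 2) = 0 by decide, zero_smul]
    simpa [two_smul] using h
  have hB0 : ∀ z : V, B 0 z = 0 := by
    intro z
    have h := hadd 0 0 z
    simp only [add_zero, zero_add] at h
    exact left_eq_add.mp h
  have hB0' : ∀ z : V, B z 0 = 0 := fun z => (hsymm z 0).trans (hB0 z)
  have hadd' : ∀ x y z : V, B x (y + z) = B x y + B x z := by
    intro x y z; rw [hsymm, hadd, hsymm y x, hsymm z x]
  have hZ2 : ∀ a : ZMod 2, a + a = 0 := by decide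
  have hne1 : ∀ a : ZMod 2, a ≠ 0 → a = 1 := by decide
  have hcast : ∀ b d : ZMod 2,
      2 * ((b.val : ZMod 4)) + 2 * ((d.val : ZMod 4)) = 2 * (((b + d).val : ZMod 4)) := by
    decide
  -- q 0 = 0
  have hq0 : q 0 = 0 := by
    have h := hq 0 0
    rw [hB0 0] at h
    simp only [add_zero, ZMod.val_zero, Nat.cast_zero, mul_zero] at h
    have h' : q 0 = q 0 + q 0 := by simpa using h
    exact (left_eq_add.mp h')
  have h2q : ∀ y : V, q y + q y = 2 * ((B y y).val : ZMod 4) := by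
    intro y
    have h := hq y y
    rw [hVchar y, hq0] at h
    have h' : q y + q y = -(2 * (((B y y).val : ZMod 4))) :=
      eq_neg_of_add_eq_zero_left h.symm
    rw [h']
    have : ∀ d : ZMod 2, -(2 * ((d.val : ZMod 4))) = 2 * ((d.val : ZMod 4)) := by decide
    exact this _
  -- the linear map to the dual and the characteristic vector c
  let L : V →ₗ[ZMod 2] Module.Dual (ZMod 2) V :=
    AddMonoidHom.toZModLinearMap 2
      { toFun := fun x => AddMonoidHom.toZModLinearMap 2
          { toFun := B x, map_zero' := hB0' x, map_add' := fun y z => hadd' x y z }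
        map_zero' := by ext y; exact hB0 y
        map_add' := fun x y => by ext z; exact hadd x y z }
  have hLapp : ∀ x y : V, L x y = B x y := fun x y => rfl
  have hLinj : Function.Injective L := by
    rw [injective_iff_map_eq_zero]
    intro x hx
    exact hnd x (fun y => by
      have := LinearMap.congr_fun hx y
      simpa [hLapp] using this)
  have hLsurj : Function.Surjective L :=
    (LinearMap.injective_iff_surjective_of_finrank_eq_finrank
      Subspace.dual_finrank_eq.symm).mp hLinj
  let φ : Module.Dual (ZMod 2) V :=
    AddMonoidHom.toZModLinearMap 2
      { toFun := fun y => B y y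
        map_zero' := hB0 0
        map_add' := by
          intro x y
          show B (x + y) (x + y) = B x x + B y y
          rw [hadd, hadd' x x y, hadd' y x y, hsymm y x]
          rw [show B x x + B x y + (B x y + B y y) = (B x x + B y y) + (B x y + B x y) by ring,
            hZ2, add_zero]}
  obtain ⟨c, hc⟩ := hLsurj φ
  have hcy : ∀ y : V, B c y = B y y := fun y => LinearMap.congr_fun hc y
  -- cardinality
  have hcard : (Fintype.card V : ℂ) = 2 ^ n := by
    rw [Module.card_eq_pow_finrank (K := ZMod 2) (V := V), ZMod.card, hdim]
    push_cast; ring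
  -- character sum
  have hchar : ∀ w : V, ∑ y : V, (-1:ℂ) ^ (B w y).val = if w = 0 then (2:ℂ)^n else 0 := by
    intro w
    by_cases hw : w = 0
    · subst hw
      simp only [hB0, ZMod.val_zero, pow_zero, Finset.sum_const, Finset.card_univ,
        nsmul_eq_mul, mul_one, if_pos rfl]
      exact hcard
    · rw [if_neg hw]
      obtain ⟨y₀, hy₀⟩ : ∃ y, B w y ≠ 0 := by
        by_contra hcon
        push_neg at hcon
        exact hw (hnd w hcon)
      have hy1 : B w y₀ = 1 := hne1 _ hy₀
      have key : ∑ y : V, (-1:ℂ) ^ (B w (y + y₀)).val = ∑ y : V, (-1:ℂ) ^ (B w y).val :=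
        Fintype.sum_equiv (Equiv.addRight y₀) _ _ (fun z => rfl)
      have key2 : ∑ y : V, (-1:ℂ) ^ (B w (y + y₀)).val
          = -∑ y : V, (-1:ℂ) ^ (B w y).val := by
        rw [← Finset.sum_neg_distrib]
        apply Finset.sum_congr rfl
        intro y _
        rw [hadd' w y y₀, hy1, stmt10_neg_pow]
      have := key.symm.trans key2
      -- S = -S
      have h2 : (2:ℂ) * ∑ y : V, (-1:ℂ) ^ (B w y).val = 0 := by
        linear_combination this
      have := mul_eq_zero.mp h2
      simpa using this
  -- the Gauss sum
  have hS2 : (∑ x : V, stmt10f (q x)) ^ 2 = stmt10f (q c) * 2 ^ n := by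
    have expand : (∑ x : V, stmt10f (q x)) ^ 2
        = ∑ y : V, ∑ x : V, stmt10f (q x) * stmt10f (q y) := by
      rw [sq, Finset.sum_mul_sum, Finset.sum_comm]
    rw [expand]
    have step1 : ∀ y : V, ∑ x : V, stmt10f (q x) * stmt10f (q y)
        = ∑ z : V, stmt10f (q z) * (-1:ℂ) ^ (B (c + z) y).val := by
      intro y
      rw [← Fintype.sum_equiv (Equiv.addRight y)
        (fun z => stmt10f (q (z + y)) * stmt10f (q y))
        (fun x => stmt10f (q x) * stmt10f (q y)) (fun z => rfl)]
      apply Finset.sum_congr rfl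
      intro z _
      rw [← stmt10f_add, hq]
      have harg : q z + q y + 2 * ((B z y).val : ZMod 4) + q y
          = q z + 2 * (((B (c + z) y).val : ZMod 4)) := by
        have h2 : B (c + z) y = B y y + B z y := by rw [hadd, hcy y]
        calc q z + q y + 2 * ((B z y).val : ZMod 4) + q y
            = q z + ((q y + q y) + 2 * ((B z y).val : ZMod 4)) := by ring
          _ = q z + (2 * ((B y y).val : ZMod 4) + 2 * ((B z y).val : ZMod 4)) := by
              rw [h2q y]
          _ = q z + 2 * (((B y y + B z y).val : ZMod 4)) := by rw [hcast]
          _ = q z + 2 * (((B (c + z) y).val : ZMod 4)) := by rw [h2]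
      rw [harg, stmt10f_add, stmt10f_two]
    calc ∑ y : V, ∑ x : V, stmt10f (q x) * stmt10f (q y)
        = ∑ y : V, ∑ z : V, stmt10f (q z) * (-1:ℂ) ^ (B (c + z) y).val :=
          Finset.sum_congr rfl (fun y _ => step1 y)
      _ = ∑ z : V, ∑ y : V, stmt10f (q z) * (-1:ℂ) ^ (B (c + z) y).val := Finset.sum_comm
      _ = ∑ z : V, stmt10f (q z) * ∑ y : V, (-1:ℂ) ^ (B (c + z) y).val := by
          simp [Finset.mul_sum]
      _ = ∑ z : V, stmt10f (q z) * (if c + z = 0 then (2:ℂ)^n else 0) := by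
          exact Finset.sum_congr rfl (fun z _ => by rw [hchar])
      _ = ∑ z : V, (if z = c then stmt10f (q z) * (2:ℂ)^n else 0) := by
          apply Finset.sum_congr rfl
          intro z _
          have hiff : c + z = 0 ↔ z = c := by
            constructor
            · intro h
              have := congrArg (fun v => c + v) h
              simp only [← add_assoc, hVchar c, zero_add, add_zero] at this
              exact this
            · intro h; rw [h]; exact hVchar c
          by_cases hz : z = c
          · rw [if_pos (hiff.mpr hz), if_pos hz]
          · rw [if_neg (fun h => hz (hiff.mp h)), if_neg hz, mul_zero]
      _ = stmt10f (q c) * 2 ^ n := by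
          rw [Finset.sum_ite_eq' Finset.univ c (fun z => stmt10f (q z) * (2:ℂ)^n),
            if_pos (Finset.mem_univ c)]
  have hSdef : (∑ x : V, Complex.I ^ (q x).val) = ∑ x : V, stmt10f (q x) := rfl
  rw [hSdef, show (8:ℕ) = 2 * 4 from rfl, pow_mul, hS2, mul_pow, stmt10f_pow4, one_mul,
    ← pow_mul]
  ring
end

section
/- Let p and q be distinct odd primes such that q is a quadratic residue modulo p. Let A be a symmetric 2×2 integer matrix with det A = -p²·q, and suppose the quotient group ℤ²⧸A·ℤ² is isomorphic to ℤ/p ⊕ ℤ/p ⊕ ℤ/q. Then the linking form β_A restricted to the p-torsion subgroup of ℤ²⧸A·ℤ² is metabolic; concretely, there exists g ∈ ℤ² with g ∉ A·ℤ², p·g ∈ A·ℤ², and gᵀA⁻¹g ∈ ℤ. -/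
/-!
Since `ℤ/p ⊕ ℤ/p ⊕ ℤ/q` is killed by `pq`, there is an integer matrix `B` with `A B = -pq`.
Comparing with `adj A · A = det A = -p²q` gives `adj A = p B`, and for `2 × 2` matrices
`A = adj (adj A) = p · adj B`. So `A = p A'` with `A'` symmetric and `det A' = -q`. As `q` is a
square mod `p`, the binary form `vᵀ A' v` is isotropic mod `p`; for such a `v` primitive mod `p`,
the element `g = A' v` is nonzero in the cokernel, `p g = A v`, and `gᵀ A⁻¹ g = vᵀ A' v / p ∈ ℤ`.
-/

open Matrix

namespace Matrix

variable {n R : Type*} [Fintype n] [DecidableEq n] [CommRing R]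

theorem exists_mul_eq_smul_one_of_smul_eq_zero (A : Matrix n n R) (c : R)
    (h : ∀ z : (n → R) ⧸ LinearMap.range A.mulVecLin, c • z = 0) :
    ∃ B : Matrix n n R, A * B = c • 1 := by
  have hcol (j : n) : ∃ y, A *ᵥ y = c • Pi.single j 1 := by
    have := h (Submodule.Quotient.mk (Pi.single j 1))
    rwa [← Submodule.Quotient.mk_smul, Submodule.Quotient.mk_eq_zero] at this
  choose y hy using hcol
  refine ⟨(of y)ᵀ, ?_⟩
  ext i j
  simpa [mul_apply, mulVec, dotProduct, Pi.single_apply, one_apply, eq_comm] using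
    congrFun (hy j) i

theorem eq_smul_adjugate_of_mul_eq_smul_one [IsDomain R] {A B : Matrix (Fin 2) (Fin 2) R}
    {c d : R} (hc : c ≠ 0) (hAB : A * B = c • 1) (hdet : A.det = c * d) :
    A = d • B.adjugate := by
  have hadj : A.adjugate = d • B := by
    apply smul_right_injective _ hc
    calc c • A.adjugate = A.adjugate * (A * B) := by rw [hAB, Matrix.mul_smul, Matrix.mul_one]
      _ = c • d • B := by
        rw [← Matrix.mul_assoc, adjugate_mul, hdet, Matrix.smul_mul, Matrix.one_mul, smul_smul]
  calc A = A.adjugate.adjugate := by simp [adjugate_adjugate]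
    _ = d • B.adjugate := by simp [hadj, adjugate_smul]

theorem exists_ne_zero_dotProduct_mulVec_eq_zero {F : Type*} [Field F]
    {M : Matrix (Fin 2) (Fin 2) F} (hM : M.IsSymm) {c : F} (hc : M.det = -c ^ 2) :
    ∃ v ≠ 0, v ⬝ᵥ M *ᵥ v = 0 := by
  have hM10 : M 1 0 = M 0 1 := by simpa using congrFun (congrFun hM 0) 1
  rw [det_fin_two, hM10] at hc
  by_cases ha : M 0 0 = 0
  · refine ⟨![1, 0], by simp, ?_⟩
    simp [mulVec, dotProduct, ha]
  · refine ⟨![(c - M 0 1) / M 0 0, 1], by simp, ?_⟩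
    simp only [dotProduct, mulVec, Fin.sum_univ_two, cons_val_zero, cons_val_one,
      cons_val_fin_one, mul_one, one_mul, hM10]
    field_simp
    linear_combination hc

end Matrix

theorem Int.cast_dotProduct_mulVec {n R : Type*} [Fintype n] [CommRing R] (M : Matrix n n ℤ)
    (v : n → ℤ) :
    ((v ⬝ᵥ M *ᵥ v : ℤ) : R) = (fun i => (v i : R)) ⬝ᵥ M.map (↑) *ᵥ fun i => (v i : R) := by
  simp [dotProduct, mulVec]

theorem exists_cast_ne_zero_dvd_dotProduct_mulVec {p : ℕ} [Fact p.Prime]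
    {M : Matrix (Fin 2) (Fin 2) ℤ} (hM : M.IsSymm) {c : ZMod p} (hc : (M.det : ZMod p) = -c ^ 2) :
    ∃ v : Fin 2 → ℤ, (fun i => (v i : ZMod p)) ≠ 0 ∧ (p : ℤ) ∣ v ⬝ᵥ M *ᵥ v := by
  obtain ⟨w, hw0, hw⟩ := exists_ne_zero_dotProduct_mulVec_eq_zero (hM.map ((↑) : ℤ → ZMod p))
    (c := c) (by rwa [← Int.cast_det])
  have hv : (fun i => (((w i).val : ℤ) : ZMod p)) = w := by ext i; simp
  refine ⟨fun i => (w i).val, by beta_reduce; rwa [hv], ?_⟩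
  rwa [← ZMod.intCast_zmod_eq_zero_iff_dvd, Int.cast_dotProduct_mulVec, hv]

theorem mulVec_dotProduct_inv_smul_mulVec {n : Type*} [Fintype n] [DecidableEq n]
    {M : Matrix n n ℤ} (hM : M.det ≠ 0) {k : ℤ} (hk : k ≠ 0) (v : n → ℤ) :
    (fun i => ((M *ᵥ v) i : ℚ)) ⬝ᵥ
        (((k • M).map ((↑) : ℤ → ℚ))⁻¹ *ᵥ fun i => ((M *ᵥ v) i : ℚ)) =
      ((v ⬝ᵥ M *ᵥ v : ℤ) : ℚ) / k := by
  set Mq := M.map ((↑) : ℤ → ℚ)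
  set w : n → ℚ := fun i => (v i : ℚ)
  have hu : IsUnit Mq.det := by
    rw [← Int.cast_det]; simpa using hM
  have hkq : (k : ℚ) ≠ 0 := by exact_mod_cast hk
  have := invertibleOfNonzero hkq
  have hMv : (fun i => ((M *ᵥ v) i : ℚ)) = Mq *ᵥ w := by ext i; simp [Mq, w, mulVec, dotProduct]
  have hkM : (k • M).map ((↑) : ℤ → ℚ) = (k : ℚ) • Mq := by
    ext; simp only [Mq, map_apply, Matrix.smul_apply, smul_eq_mul, Int.cast_mul]
  have hsolve : ((k : ℚ) • Mq)⁻¹ *ᵥ (Mq *ᵥ w) = (k : ℚ)⁻¹ • w := by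
    rw [inv_smul _ _ hu, invOf_eq_inv, smul_mulVec, mulVec_mulVec, nonsing_inv_mul _ hu,
      one_mulVec]
  rw [hMv, hkM, hsolve, dotProduct_smul, dotProduct_comm, Int.cast_dotProduct_mulVec, smul_eq_mul,
    inv_mul_eq_div]

theorem stmt_12_general (p q : ℕ) [Fact p.Prime] [Fact q.Prime]
    (hres : ∃ c : ZMod p, c ≠ 0 ∧ c ^ 2 = (q : ZMod p))
    (A : Matrix (Fin 2) (Fin 2) ℤ) (hsymm : A.IsSymm)
    (hdet : A.det = -((p : ℤ) ^ 2 * (q : ℤ)))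
    (hiso : Nonempty
      (((Fin 2 → ℤ) ⧸ LinearMap.range (Matrix.mulVecLin A)) ≃+
        (ZMod p × ZMod p × ZMod q))) :
    ∃ g : Fin 2 → ℤ,
      (¬ ∃ y : Fin 2 → ℤ, g = A.mulVec y) ∧
      (∃ y : Fin 2 → ℤ, (p : ℤ) • g = A.mulVec y) ∧
      (∃ m : ℤ, dotProduct (fun i => (g i : ℚ))
          (((A.map ((↑) : ℤ → ℚ))⁻¹).mulVec (fun i => (g i : ℚ))) = (m : ℚ)) := by
  obtain ⟨e⟩ := hiso
  have hp0 : (p : ℤ) ≠ 0 := by exact_mod_cast (Fact.out : p.Prime).ne_zero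
  have hq0 : (q : ℤ) ≠ 0 := by exact_mod_cast (Fact.out : q.Prime).ne_zero
  have hcoker (z : (Fin 2 → ℤ) ⧸ LinearMap.range A.mulVecLin) : -((p : ℤ) * q) • z = 0 :=
    e.injective <| by
      rw [map_zsmul, map_zero]
      obtain ⟨a, b, c⟩ := e z
      ext <;> simp
  obtain ⟨B, hAB⟩ := A.exists_mul_eq_smul_one_of_smul_eq_zero _ hcoker
  have hA : A = (p : ℤ) • B.adjugate :=
    eq_smul_adjugate_of_mul_eq_smul_one (neg_ne_zero.mpr (mul_ne_zero hp0 hq0)) hAB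
      (by rw [hdet]; ring)
  set A' := B.adjugate
  have hdet' : A'.det = -q := by
    have h := det_smul A' (p : ℤ)
    rw [← hA, hdet, Fintype.card_fin] at h
    exact mul_left_cancel₀ (pow_ne_zero 2 hp0) (by rw [← h]; ring)
  have hsymm' : A'.IsSymm := smul_right_injective _ hp0 <| by
    change (p : ℤ) • A'ᵀ = (p : ℤ) • A'
    rw [← transpose_smul, ← hA]; exact hsymm
  obtain ⟨c, -, hc⟩ := hres
  obtain ⟨v, hv0, m, hm⟩ := exists_cast_ne_zero_dvd_dotProduct_mulVec hsymm' (c := c)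
    (by rw [hdet', hc]; push_cast; rfl)
  have hdet'0 : A'.det ≠ 0 := by simpa [hdet'] using hq0
  refine ⟨A' *ᵥ v, ?_, ⟨v, by rw [hA, smul_mulVec]⟩, ⟨m, ?_⟩⟩
  · rintro ⟨z, hz⟩
    have hvz : v = (p : ℤ) • z := sub_eq_zero.mp <| eq_zero_of_mulVec_eq_zero hdet'0 <| by
      rw [mulVec_sub, mulVec_smul, hz, hA, smul_mulVec, sub_self]
    exact hv0 (by ext i; simp [hvz])
  · rw [hA, mulVec_dotProduct_inv_smul_mulVec hdet'0 hp0, hm]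
    push_cast
    exact mul_div_cancel_left₀ _ (by exact_mod_cast hp0)

/-- Let `p` and `q` be distinct odd primes with `q` a quadratic residue
mod `p`, and let `A` be a symmetric `2 × 2` integer matrix with `det A = -p²q` and
`ℤ²/A·ℤ² ≅ ℤ/p ⊕ ℤ/p ⊕ ℤ/q`. Then the linking form `β_A` restricted to the `p`-torsion
subgroup is metabolic: there exists `g ∈ ℤ²` with `g ∉ A·ℤ²`, `p·g ∈ A·ℤ²`, and
`gᵀA⁻¹g ∈ ℤ`. -/
theorem stmt_12 (p q : ℕ) [Fact p.Prime] [Fact q.Prime] (hp : Odd p) (hq : Odd q)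
    (hpq : p ≠ q) (hres : ∃ c : ZMod p, c ≠ 0 ∧ c ^ 2 = (q : ZMod p))
    (A : Matrix (Fin 2) (Fin 2) ℤ) (hsymm : A.IsSymm)
    (hdet : A.det = -((p : ℤ) ^ 2 * (q : ℤ)))
    (hiso : Nonempty
      (((Fin 2 → ℤ) ⧸ LinearMap.range (Matrix.mulVecLin A)) ≃+
        (ZMod p × ZMod p × ZMod q))) :
    ∃ g : Fin 2 → ℤ,
      (¬ ∃ y : Fin 2 → ℤ, g = A.mulVec y) ∧
      (∃ y : Fin 2 → ℤ, (p : ℤ) • g = A.mulVec y) ∧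
      (∃ m : ℤ, dotProduct (fun i => (g i : ℚ))
          (((A.map ((↑) : ℤ → ℚ))⁻¹).mulVec (fun i => (g i : ℚ))) = (m : ℚ)) :=
  stmt_12_general p q hres A hsymm hdet hiso
end
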